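/- arXiv:2506.15441 — 2 statements merged into one kernel-verified Lean document; each statement's English description precedes it below -/
import Mathlib

section
/- In the discrete lm-SCM for the motivating example (Figure 1c), under Positivity, the context-parameterized AIPW score is robust to misspecification of the outcome model: for arbitrary functions Q̃₁ : 𝒲 × 𝒴₀ × {0,1} → ℝ and Q̃₀ : 𝒲 × {0,1} → ℝ, with the true propensities of the Nuisance functions, E[ (Q̃_R(1) − Q̃_R(0)) + (A − π_R) / (π_R (1 − π_R)) · (Y₁ − Q̃_R(A)) ] = θ, where pointwise on Ω, Q̃_R(a) := if R = 1 then Q̃₁(W, Y₀, a) else Q̃₀(W, a), and π_R := if R = 1 then π₁(W, Y₀) else π₀(W). -/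
open MeasureTheory ProbabilityTheory

/-- Conditional probability of `S` given the event `E`: `μ(S ∩ E) / μ(E)`. -/
noncomputable def cprob {Ω : Type*} [MeasurableSpace Ω] (μ : Measure Ω) (S E : Set Ω) : ENNReal :=
  μ (S ∩ E) / μ E

/-- Conditional expectation of `X` given the event `E`: `μ(E)⁻¹ * ∫_E X dμ`. -/
noncomputable def cexp {Ω : Type*} [MeasurableSpace Ω] (μ : Measure Ω) (X : Ω → ℝ) (E : Set Ω) : ℝ :=
  ((μ E).toReal)⁻¹ * ∫ ω in E, X ω ∂μ

/-! Stratify by the context `Z = (W, Y₀, R)`. Inside a stratum the treatment `A` is a function of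
`(W, U₀, U_R, U_A)`, which is independent of `U_Y`, so on each cell `A = a` the outcome `Y₁` has
the same mean as the potential outcome `Y₁ᵃ` has on the whole stratum. The true propensity is the
frequency of `A = 1` in the stratum; for `R = 0` this is because, given `W`, `Y₀` is a function of
`U₀`, which is independent of `(W, U_R, U_A)`. The AIPW score is affine in the outcome, so its
integral over a stratum is the mass-weighted sum of its values at the two cell means, and in that
sum the outcome model cancels. -/

theorem integral_eq_sum_setIntegral_preimage {Ω α : Type*} [MeasurableSpace Ω] {μ : Measure Ω}
    [Fintype α] [MeasurableSpace α] [MeasurableSingletonClass α] {X : Ω → α} (hX : Measurable X)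
    {f : Ω → ℝ} (hf : Integrable f μ) :
    ∫ ω, f ω ∂μ = ∑ x, ∫ ω in X ⁻¹' {x}, f ω ∂μ := by
  rw [← integral_iUnion_fintype (fun x => hX (measurableSet_singleton x))
    (pairwise_disjoint_fiber X) fun _ => hf.integrableOn, ← Set.preimage_iUnion,
    Set.iUnion_of_singleton, Set.preimage_univ, setIntegral_univ]

theorem integrable_comp_add_comp_mul {Ω α : Type*} [MeasurableSpace Ω] {μ : Measure Ω}
    [IsFiniteMeasure μ] [Finite α] [MeasurableSpace α] [MeasurableSingletonClass α] {X : Ω → α}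
    (hX : Measurable X) (φ ψ : α → ℝ) {Y : Ω → ℝ} (hY : Integrable Y μ) :
    Integrable (fun ω => φ (X ω) + ψ (X ω) * Y ω) μ := by
  obtain ⟨Cφ, hCφ⟩ := (Set.finite_range fun x => ‖φ x‖).bddAbove
  obtain ⟨Cψ, hCψ⟩ := (Set.finite_range fun x => ‖ψ x‖).bddAbove
  refine .add (.of_bound ((measurable_of_finite φ).comp hX).aestronglyMeasurable Cφ
    (.of_forall fun ω => hCφ ⟨X ω, rfl⟩)) ?_
  exact hY.bdd_mul ((measurable_of_finite ψ).comp hX).aestronglyMeasurable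
    (.of_forall fun ω => hCψ ⟨X ω, rfl⟩)

theorem ProbabilityTheory.iIndep.indep_biSup_of_notMem {Ω ι : Type*} {m : ι → MeasurableSpace Ω}
    {mΩ : MeasurableSpace Ω} {μ : Measure Ω} (h_le : ∀ i, m i ≤ mΩ) (h : iIndep m μ)
    {S : Set ι} {i : ι} (hi : i ∉ S) :
    Indep (⨆ j ∈ S, m j) (m i) μ := by
  simpa using indep_iSup_of_disjoint h_le h (Set.disjoint_singleton_right.2 hi)

theorem cprob_inter_preimage_eq_of_indep {Ω 𝒰 : Type*} {M mΩ : MeasurableSpace Ω}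
    [MeasurableSpace 𝒰] {μ : Measure Ω} [IsFiniteMeasure μ] {U : Ω → 𝒰}
    (hind : Indep M (MeasurableSpace.comap U inferInstance) μ) {S E : Set Ω}
    (hSE : MeasurableSet[M] (S ∩ E)) (hE : MeasurableSet[M] E) {B : Set 𝒰}
    (hB : MeasurableSet B) (hpos : μ (E ∩ U ⁻¹' B) ≠ 0) :
    cprob μ S (E ∩ U ⁻¹' B) = cprob μ S E := by
  have hUB : MeasurableSet[MeasurableSpace.comap U inferInstance] (U ⁻¹' B) := ⟨B, hB, rfl⟩
  have hB0 : μ (U ⁻¹' B) ≠ 0 := fun h => hpos (measure_mono_null Set.inter_subset_right h)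
  rw [cprob, cprob, ← Set.inter_assoc, (Indep_iff _ _ μ).1 hind _ _ hSE hUB,
    (Indep_iff _ _ μ).1 hind _ _ hE hUB, ENNReal.mul_div_mul_right _ _ hB0 (measure_ne_top μ _)]

noncomputable def aipwScore (q : Fin 2 → ℝ) (p : ℝ) (a : Fin 2) (y : ℝ) : ℝ :=
  q 1 - q 0 + (((a : ℕ) : ℝ) - p) / (p * (1 - p)) * (y - q a)

theorem aipwScore_eq_add_mul (q : Fin 2 → ℝ) (p : ℝ) (a : Fin 2) (y : ℝ) :
    aipwScore q p a y = (q 1 - q 0 - (((a : ℕ) : ℝ) - p) / (p * (1 - p)) * q a)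
      + (((a : ℕ) : ℝ) - p) / (p * (1 - p)) * y := by
  rw [aipwScore]; ring

theorem mul_aipwScore_zero_add_mul_aipwScore_one {N₀ N₁ : ℝ} (h₀ : 0 < N₀) (h₁ : 0 < N₁)
    (q m : Fin 2 → ℝ) :
    N₀ * aipwScore q (N₁ / (N₀ + N₁)) 0 (m 0) + N₁ * aipwScore q (N₁ / (N₀ + N₁)) 1 (m 1)
      = (N₀ + N₁) * (m 1 - m 0) := by
  have h : 1 - N₁ / (N₀ + N₁) = N₀ / (N₀ + N₁) := by field_simp; ring
  simp only [aipwScore, Fin.val_zero, Fin.val_one, Nat.cast_zero, Nat.cast_one, h]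
  field_simp
  ring

section AIPW

variable {Ω : Type*} [MeasurableSpace Ω] {μ : Measure Ω} [IsFiniteMeasure μ]

theorem integrable_aipwScore {κ : Type*} [Finite κ] [MeasurableSpace κ]
    [MeasurableSingletonClass κ] {X : Ω → κ} (hX : Measurable X) {A : Ω → Fin 2}
    (hA : Measurable A) (q : κ → Fin 2 → ℝ) (p : κ → ℝ) {Y : Ω → ℝ} (hY : Integrable Y μ) :
    Integrable (fun ω => aipwScore (q (X ω)) (p (X ω)) (A ω) (Y ω)) μ := by
  simp only [aipwScore_eq_add_mul]
  exact integrable_comp_add_comp_mul (hX.prodMk hA)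
    (fun x => q x.1 1 - q x.1 0 - (((x.2 : ℕ) : ℝ) - p x.1) / (p x.1 * (1 - p x.1)) * q x.1 x.2)
    (fun x => (((x.2 : ℕ) : ℝ) - p x.1) / (p x.1 * (1 - p x.1))) hY

theorem setIntegral_aipwScore_eq {E : Set Ω} (hE : MeasurableSet E) {A : Ω → Fin 2}
    (hA : Measurable A) {Y : Ω → ℝ} (hY : IntegrableOn Y E μ) (q : Fin 2 → ℝ)
    (hpos : ∀ a, μ (A ⁻¹' {a} ∩ E) ≠ 0) {m : Fin 2 → ℝ}
    (hm : ∀ a, ∫ ω in A ⁻¹' {a} ∩ E, Y ω ∂μ = μ.real (A ⁻¹' {a} ∩ E) * m a) :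
    ∫ ω in E, aipwScore q (cprob μ (A ⁻¹' {1}) E).toReal (A ω) (Y ω) ∂μ
      = μ.real E * (m 1 - m 0) := by
  set p := (cprob μ (A ⁻¹' {1}) E).toReal with hp_def
  have hcell (a : Fin 2) : MeasurableSet (A ⁻¹' {a} ∩ E) :=
    (hA (measurableSet_singleton a)).inter hE
  have hsum : ∀ f : Ω → ℝ, IntegrableOn f E μ →
      ∫ ω in E, f ω ∂μ = ∑ a, ∫ ω in A ⁻¹' {a} ∩ E, f ω ∂μ := fun f hf => by
    simp only [integral_eq_sum_setIntegral_preimage hA hf,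
      Measure.restrict_restrict (hA (measurableSet_singleton _))]
  have hcell_mean (a : Fin 2) : ∫ ω in A ⁻¹' {a} ∩ E, aipwScore q p (A ω) (Y ω) ∂μ
      = μ.real (A ⁻¹' {a} ∩ E) * aipwScore q p a (m a) := by
    rw [setIntegral_congr_fun (hcell a) fun ω (hω : A ω = a ∧ ω ∈ E) => by
      rw [hω.1, aipwScore_eq_add_mul], integral_add (integrable_const _)
      ((hY.mono_set Set.inter_subset_right).const_mul _), setIntegral_const, integral_const_mul,
      hm, aipwScore_eq_add_mul, smul_eq_mul]
    ring
  have hmass : μ.real E = μ.real (A ⁻¹' {0} ∩ E) + μ.real (A ⁻¹' {1} ∩ E) := by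
    simpa [Fin.sum_univ_two] using hsum 1 (integrableOn_const (measure_ne_top μ E))
  have hp : p = μ.real (A ⁻¹' {1} ∩ E) / μ.real E := by
    rw [hp_def, cprob, ENNReal.toReal_div]; rfl
  rw [hsum _ (integrable_aipwScore (μ := μ.restrict E) hA hA (fun _ => q) (fun _ => p) hY),
    Fin.sum_univ_two, hcell_mean, hcell_mean, hp, hmass]
  exact mul_aipwScore_zero_add_mul_aipwScore_one
    (ENNReal.toReal_pos (hpos 0) (measure_ne_top μ _))
    (ENNReal.toReal_pos (hpos 1) (measure_ne_top μ _)) q m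

end AIPW

theorem integral_aipwScore_eq_of_indep {Ω κ 𝒰 : Type*} {M mΩ : MeasurableSpace Ω} [Fintype κ]
    [MeasurableSpace κ] [MeasurableSingletonClass κ] [MeasurableSpace 𝒰] {μ : Measure Ω}
    [IsFiniteMeasure μ] (hM : M ≤ mΩ) {Z : Ω → κ} {A : Ω → Fin 2} {U : Ω → 𝒰}
    (hZ : Measurable[M] Z) (hA : Measurable[M] A) (hU : Measurable U)
    (hind : Indep M (MeasurableSpace.comap U inferInstance) μ)
    {H : κ → Fin 2 → 𝒰 → ℝ} (hH : ∀ z a, Measurable (H z a))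
    (hY : Integrable (fun ω => H (Z ω) (A ω) (U ω)) μ)
    (hYpot : ∀ a, Integrable (fun ω => H (Z ω) a (U ω)) μ)
    (hpos : ∀ z a, μ (A ⁻¹' {a} ∩ Z ⁻¹' {z}) ≠ 0) (q : κ → Fin 2 → ℝ) {p : κ → ℝ}
    (hp : ∀ z, p z = (cprob μ (A ⁻¹' {1}) (Z ⁻¹' {z})).toReal) :
    ∫ ω, aipwScore (q (Z ω)) (p (Z ω)) (A ω) (H (Z ω) (A ω) (U ω)) ∂μ
      = ∫ ω, H (Z ω) 1 (U ω) ∂μ - ∫ ω, H (Z ω) 0 (U ω) ∂μ := by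
  have hZ' : Measurable Z := hZ.mono hM le_rfl
  have hA' : Measurable A := hA.mono hM le_rfl
  have hstratum (z : κ) : MeasurableSet[M] (Z ⁻¹' {z}) := hZ (measurableSet_singleton z)
  have hmean {s : Set Ω} {f : Ω → ℝ} (z : κ) (a : Fin 2) (hs : MeasurableSet[M] s)
      (hf : Set.EqOn f (fun ω => H z a (U ω)) s) :
      ∫ ω in s, f ω ∂μ = μ.real s * ∫ ω, H z a (U ω) ∂μ := by
    rw [setIntegral_congr_fun (hM _ hs) hf,
      hind.setIntegral_eq_mul hM hU.aemeasurable hs (hH z a).aestronglyMeasurable]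
  rw [integral_eq_sum_setIntegral_preimage hZ' (integrable_aipwScore hZ' hA' q p hY),
    integral_eq_sum_setIntegral_preimage hZ' (hYpot 1),
    integral_eq_sum_setIntegral_preimage hZ' (hYpot 0), ← Finset.sum_sub_distrib]
  refine Finset.sum_congr rfl fun z _ => ?_
  have hE : MeasurableSet (Z ⁻¹' {z}) := hM _ (hstratum z)
  rw [setIntegral_congr_fun hE fun ω (hω : Z ω = z) => by rw [hω, hp],
    setIntegral_aipwScore_eq hE hA'
      (hY.integrableOn.congr_fun (fun ω (hω : Z ω = z) => by simp only [hω]) hE) (q z) (hpos z)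
      fun a => hmean z a ((hA (measurableSet_singleton a)).inter (hstratum z))
        fun ω (hω : A ω = a ∧ Z ω = z) => by simp only [hω.1],
    hmean z 1 (hstratum z) fun ω (hω : Z ω = z) => by simp only [hω],
    hmean z 0 (hstratum z) fun ω (hω : Z ω = z) => by simp only [hω]]
  ring

section lmSCM

variable {Ω 𝒲 𝒴₀ 𝒰₀ 𝒰R 𝒰A 𝒰Y : Type*} [MeasurableSpace 𝒲] [MeasurableSpace 𝒴₀]
  [MeasurableSpace 𝒰₀] [MeasurableSpace 𝒰R] [MeasurableSpace 𝒰A] [MeasurableSpace 𝒰Y]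

abbrev exogenousSigma (W : Ω → 𝒲) (U₀ : Ω → 𝒰₀) (UR : Ω → 𝒰R) (UA : Ω → 𝒰A) (UY : Ω → 𝒰Y) :
    Fin 5 → MeasurableSpace Ω :=
  ![MeasurableSpace.comap W inferInstance, MeasurableSpace.comap U₀ inferInstance,
    MeasurableSpace.comap UR inferInstance, MeasurableSpace.comap UA inferInstance,
    MeasurableSpace.comap UY inferInstance]

variable {W : Ω → 𝒲} {U₀ : Ω → 𝒰₀} {UR : Ω → 𝒰R} {UA : Ω → 𝒰A} {UY : Ω → 𝒰Y}
  {f₀ : 𝒲 × 𝒰₀ → 𝒴₀} {fR : 𝒲 × 𝒰R → Fin 2} {fA : 𝒲 × 𝒴₀ × 𝒰A → Fin 2}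
  {gA : 𝒲 × 𝒰A → Fin 2} {Y₀ : Ω → 𝒴₀} {R A : Ω → Fin 2}

theorem exogenousSigma_le {mΩ : MeasurableSpace Ω} (hW : Measurable W) (hU₀ : Measurable U₀)
    (hUR : Measurable UR) (hUA : Measurable UA) (hUY : Measurable UY) (i : Fin 5) :
    exogenousSigma W U₀ UR UA UY i ≤ mΩ := by
  fin_cases i
  exacts [hW.comap_le, hU₀.comap_le, hUR.comap_le, hUA.comap_le, hUY.comap_le]

theorem lmSCM_measurable {M : MeasurableSpace Ω} (hW : Measurable[M] W) (hU₀ : Measurable[M] U₀)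
    (hUR : Measurable[M] UR) (hUA : Measurable[M] UA) (hf₀ : Measurable f₀)
    (hfR : Measurable fR) (hfA : Measurable fA) (hgA : Measurable gA)
    (hY₀ : ∀ ω, Y₀ ω = f₀ (W ω, U₀ ω)) (hR : ∀ ω, R ω = fR (W ω, UR ω))
    (hA : ∀ ω, A ω = if R ω = 1 then fA (W ω, Y₀ ω, UA ω) else gA (W ω, UA ω)) :
    Measurable[M] Y₀ ∧ Measurable[M] R ∧ Measurable[M] A := by
  obtain rfl : Y₀ = _ := funext hY₀
  obtain rfl : R = _ := funext hR
  obtain rfl : A = _ := funext hA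
  have hR' : Measurable[M] fun ω => fR (W ω, UR ω) := hfR.comp (hW.prodMk hUR)
  exact ⟨hf₀.comp (hW.prodMk hU₀), hR', .ite (hR' (measurableSet_singleton 1))
    (hfA.comp (hW.prodMk ((hf₀.comp (hW.prodMk hU₀)).prodMk hUA))) (hgA.comp (hW.prodMk hUA))⟩

theorem lmSCM_exists_indep_outcomeNoise {mΩ : MeasurableSpace Ω} {μ : Measure Ω}
    (hW : Measurable W) (hU₀ : Measurable U₀) (hUR : Measurable UR) (hUA : Measurable UA)
    (hUY : Measurable UY) (hIndep : iIndep (exogenousSigma W U₀ UR UA UY) μ)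
    (hf₀ : Measurable f₀) (hfR : Measurable fR) (hfA : Measurable fA) (hgA : Measurable gA)
    (hY₀ : ∀ ω, Y₀ ω = f₀ (W ω, U₀ ω)) (hR : ∀ ω, R ω = fR (W ω, UR ω))
    (hA : ∀ ω, A ω = if R ω = 1 then fA (W ω, Y₀ ω, UA ω) else gA (W ω, UA ω)) :
    ∃ M ≤ mΩ, Indep M (MeasurableSpace.comap UY inferInstance) μ ∧
      Measurable[M] (fun ω => (W ω, Y₀ ω, R ω)) ∧ Measurable[M] A := by
  have h_le := exogenousSigma_le hW hU₀ hUR hUA hUY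
  set M := ⨆ i ∈ ({0, 1, 2, 3} : Set (Fin 5)), exogenousSigma W U₀ UR UA UY i
  have hle : ∀ i ∈ ({0, 1, 2, 3} : Set (Fin 5)), exogenousSigma W U₀ UR UA UY i ≤ M :=
    fun i hi => le_biSup _ hi
  have hWM : Measurable[M] W := measurable_iff_comap_le.2 (hle 0 (by simp))
  obtain ⟨hY₀M, hRM, hAM⟩ := lmSCM_measurable hWM (measurable_iff_comap_le.2 (hle 1 (by simp)))
    (measurable_iff_comap_le.2 (hle 2 (by simp))) (measurable_iff_comap_le.2 (hle 3 (by simp)))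
    hf₀ hfR hfA hgA hY₀ hR hA
  exact ⟨M, iSup₂_le fun i _ => h_le i, hIndep.indep_biSup_of_notMem h_le (i := 4) (by simp),
    hWM.prodMk (hY₀M.prodMk hRM), hAM⟩

theorem lmSCM_cprob_untreated_eq [MeasurableSingletonClass 𝒲] [MeasurableSingletonClass 𝒴₀]
    {mΩ : MeasurableSpace Ω} {μ : Measure Ω} [IsFiniteMeasure μ]
    (hW : Measurable W) (hU₀ : Measurable U₀) (hUR : Measurable UR) (hUA : Measurable UA)
    (hUY : Measurable UY) (hIndep : iIndep (exogenousSigma W U₀ UR UA UY) μ)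
    (hf₀ : Measurable f₀) (hfR : Measurable fR) (hgA : Measurable gA)
    (hY₀ : ∀ ω, Y₀ ω = f₀ (W ω, U₀ ω)) (hR : ∀ ω, R ω = fR (W ω, UR ω))
    (hA : ∀ ω, A ω = if R ω = 1 then fA (W ω, Y₀ ω, UA ω) else gA (W ω, UA ω))
    {w : 𝒲} {y : 𝒴₀} (hpos : μ {ω | W ω = w ∧ Y₀ ω = y ∧ R ω = 0} ≠ 0) :
    cprob μ {ω | A ω = 1} {ω | W ω = w ∧ Y₀ ω = y ∧ R ω = 0}
      = cprob μ {ω | A ω = 1} {ω | W ω = w ∧ R ω = 0} := by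
  set M := ⨆ i ∈ ({0, 2, 3} : Set (Fin 5)), exogenousSigma W U₀ UR UA UY i
  have hind : Indep M (MeasurableSpace.comap U₀ inferInstance) μ :=
    hIndep.indep_biSup_of_notMem (exogenousSigma_le hW hU₀ hUR hUA hUY) (i := 1) (by simp)
  have hle : ∀ i ∈ ({0, 2, 3} : Set (Fin 5)), exogenousSigma W U₀ UR UA UY i ≤ M :=
    fun i hi => le_biSup _ hi
  have hWM : Measurable[M] W := measurable_iff_comap_le.2 (hle 0 (by simp))
  have hURM : Measurable[M] UR := measurable_iff_comap_le.2 (hle 2 (by simp))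
  have hUAM : Measurable[M] UA := measurable_iff_comap_le.2 (hle 3 (by simp))
  have hRM : Measurable[M] R := by
    rw [funext hR]; exact hfR.comp (hWM.prodMk hURM)
  set E := {ω | W ω = w ∧ R ω = 0}
  have hE : MeasurableSet[M] E :=
    (hWM (measurableSet_singleton w)).inter (hRM (measurableSet_singleton 0))
  have hAE : {ω | A ω = 1} ∩ E = (fun ω => gA (W ω, UA ω)) ⁻¹' {1} ∩ E := by
    ext ω
    simp +contextual [E, hA ω]
  have hstratum : {ω | W ω = w ∧ Y₀ ω = y ∧ R ω = 0} = E ∩ U₀ ⁻¹' {u | f₀ (w, u) = y} := by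
    ext ω
    simp only [E, hY₀ ω, Set.mem_ofPred_eq, Set.mem_inter_iff, Set.mem_preimage]
    constructor
    · rintro ⟨rfl, h, hr⟩; exact ⟨⟨rfl, hr⟩, h⟩
    · rintro ⟨⟨rfl, hr⟩, h⟩; exact ⟨rfl, h, hr⟩
  rw [hstratum] at hpos ⊢
  refine cprob_inter_preimage_eq_of_indep hind ?_ hE
    ((hf₀.comp (measurable_const.prodMk measurable_id)) (measurableSet_singleton y)) hpos
  rw [hAE]
  exact ((hgA.comp (hWM.prodMk hUAM)) (measurableSet_singleton 1)).inter hE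

end lmSCM

theorem lmSCM_aipw_robust_outcome_misspecification_general
    {Ω 𝒲 𝒴₀ 𝒰₀ 𝒰R 𝒰A 𝒰Y : Type*}
    [MeasurableSpace Ω]
    [Fintype 𝒲] [MeasurableSpace 𝒲] [MeasurableSingletonClass 𝒲]
    [Fintype 𝒴₀] [MeasurableSpace 𝒴₀] [MeasurableSingletonClass 𝒴₀]
    [MeasurableSpace 𝒰₀] [MeasurableSpace 𝒰R] [MeasurableSpace 𝒰A] [MeasurableSpace 𝒰Y]
    (μ : Measure Ω) [IsProbabilityMeasure μ]
    (W : Ω → 𝒲) (U₀ : Ω → 𝒰₀) (UR : Ω → 𝒰R) (UA : Ω → 𝒰A) (UY : Ω → 𝒰Y)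
    (hW : Measurable W) (hU₀ : Measurable U₀) (hUR : Measurable UR)
    (hUA : Measurable UA) (hUY : Measurable UY)
    (hIndep : iIndep
      (![MeasurableSpace.comap W inferInstance, MeasurableSpace.comap U₀ inferInstance,
         MeasurableSpace.comap UR inferInstance, MeasurableSpace.comap UA inferInstance,
         MeasurableSpace.comap UY inferInstance] : Fin 5 → MeasurableSpace Ω) μ)
    (f₀ : 𝒲 × 𝒰₀ → 𝒴₀) (hf₀ : Measurable f₀)
    (fR : 𝒲 × 𝒰R → Fin 2) (hfR : Measurable fR)
    (fA : 𝒲 × 𝒴₀ × 𝒰A → Fin 2) (hfA : Measurable fA)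
    (gA : 𝒲 × 𝒰A → Fin 2) (hgA : Measurable gA)
    (fY : 𝒲 × 𝒴₀ × Fin 2 × 𝒰Y → ℝ) (hfY : Measurable fY)
    (gY : 𝒲 × Fin 2 × 𝒰Y → ℝ) (hgY : Measurable gY)
    (Y₀ : Ω → 𝒴₀) (R A : Ω → Fin 2) (Y₁ : Ω → ℝ)
    (hY₀ : ∀ ω, Y₀ ω = f₀ (W ω, U₀ ω))
    (hR : ∀ ω, R ω = fR (W ω, UR ω))
    (hA : ∀ ω, A ω = if R ω = 1 then fA (W ω, Y₀ ω, UA ω) else gA (W ω, UA ω))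
    (hY₁ : ∀ ω, Y₁ ω = if R ω = 1 then fY (W ω, Y₀ ω, A ω, UY ω) else gY (W ω, A ω, UY ω))
    (Ynat : Fin 2 → Ω → ℝ)
    (hYnat : ∀ (a : Fin 2) (ω : Ω),
      Ynat a ω = if R ω = 1 then fY (W ω, Y₀ ω, a, UY ω) else gY (W ω, a, UY ω))
    (hIntY₁ : Integrable Y₁ μ)
    (hIntN0 : Integrable (Ynat 0) μ) (hIntN1 : Integrable (Ynat 1) μ)
    (hpos : ∀ (w : 𝒲) (y : 𝒴₀) (r a : Fin 2),
      0 < μ {ω | W ω = w ∧ Y₀ ω = y ∧ R ω = r ∧ A ω = a})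
    (π1 : 𝒲 → 𝒴₀ → ℝ)
    (hπ1 : ∀ (w : 𝒲) (y : 𝒴₀),
      π1 w y = (cprob μ {ω | A ω = 1} {ω | W ω = w ∧ Y₀ ω = y ∧ R ω = 1}).toReal)
    (π0 : 𝒲 → ℝ)
    (hπ0 : ∀ w : 𝒲, π0 w = (cprob μ {ω | A ω = 1} {ω | W ω = w ∧ R ω = 0}).toReal)
    :
    ∀ (Qt1 : 𝒲 → 𝒴₀ → Fin 2 → ℝ) (Qt0 : 𝒲 → Fin 2 → ℝ),
      ∫ ω, (((if R ω = 1 then Qt1 (W ω) (Y₀ ω) 1 else Qt0 (W ω) 1)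
              - (if R ω = 1 then Qt1 (W ω) (Y₀ ω) 0 else Qt0 (W ω) 0))
            + (((A ω : ℕ) : ℝ) - (if R ω = 1 then π1 (W ω) (Y₀ ω) else π0 (W ω)))
                / ((if R ω = 1 then π1 (W ω) (Y₀ ω) else π0 (W ω))
                    * (1 - (if R ω = 1 then π1 (W ω) (Y₀ ω) else π0 (W ω))))
                * (Y₁ ω - (if R ω = 1 then Qt1 (W ω) (Y₀ ω) (A ω) else Qt0 (W ω) (A ω)))) ∂μ
        = (∫ ω, Ynat 1 ω ∂μ) - (∫ ω, Ynat 0 ω ∂μ) := by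
  intro Qt1 Qt0
  obtain ⟨M, hM, hind, hZ, hAM⟩ := lmSCM_exists_indep_outcomeNoise hW hU₀ hUR hUA hUY hIndep
    hf₀ hfR hfA hgA hY₀ hR hA
  obtain rfl : Y₁ = _ := funext hY₁
  obtain rfl : Ynat = _ := funext₂ hYnat
  refine integral_aipwScore_eq_of_indep hM hZ hAM hUY hind
    (H := fun z a u => if z.2.2 = 1 then fY (z.1, z.2.1, a, u) else gY (z.1, a, u))
    (fun z a => by split_ifs <;> fun_prop) hIntY₁ (Fin.forall_fin_two.2 ⟨hIntN0, hIntN1⟩) ?_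
    (fun z a => if z.2.2 = 1 then Qt1 z.1 z.2.1 a else Qt0 z.1 a)
    (p := fun z => if z.2.2 = 1 then π1 z.1 z.2.1 else π0 z.1) ?_
  · rintro ⟨w, y, r⟩ a
    convert (hpos w y r a).ne' using 2
    ext; simp [and_comm, and_assoc]
  · rintro ⟨w, y, r⟩
    rw [show (fun ω => (W ω, Y₀ ω, R ω)) ⁻¹' {(w, y, r)} = {ω | W ω = w ∧ Y₀ ω = y ∧ R ω = r} by
      ext; simp]
    fin_cases r
    · have hstratum_pos : μ {ω | W ω = w ∧ Y₀ ω = y ∧ R ω = 0} ≠ 0 := by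
        refine ((hpos w y 0 0).trans_le (measure_mono ?_)).ne'
        exact fun _ hω => ⟨hω.1, hω.2.1, hω.2.2.1⟩
      rw [hπ0]
      exact congrArg ENNReal.toReal (lmSCM_cprob_untreated_eq hW hU₀ hUR hUA hUY hIndep hf₀ hfR hgA
        hY₀ hR hA hstratum_pos).symm
    · exact hπ1 w y

/-- In the discrete lm-SCM of Figure 1c, under positivity, the context-parameterized AIPW score is robust to misspecification of the outcome model. -/
theorem lmSCM_aipw_robust_outcome_misspecification
    {Ω 𝒲 𝒴₀ 𝒰₀ 𝒰R 𝒰A 𝒰Y : Type*}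
    [MeasurableSpace Ω]
    [Fintype 𝒲] [Nonempty 𝒲] [MeasurableSpace 𝒲] [MeasurableSingletonClass 𝒲]
    [Fintype 𝒴₀] [Nonempty 𝒴₀] [MeasurableSpace 𝒴₀] [MeasurableSingletonClass 𝒴₀]
    [MeasurableSpace 𝒰₀] [MeasurableSpace 𝒰R] [MeasurableSpace 𝒰A] [MeasurableSpace 𝒰Y]
    (μ : Measure Ω) [IsProbabilityMeasure μ]
    (W : Ω → 𝒲) (U₀ : Ω → 𝒰₀) (UR : Ω → 𝒰R) (UA : Ω → 𝒰A) (UY : Ω → 𝒰Y)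
    (hW : Measurable W) (hU₀ : Measurable U₀) (hUR : Measurable UR)
    (hUA : Measurable UA) (hUY : Measurable UY)
    (hIndep : iIndep
      (![MeasurableSpace.comap W inferInstance, MeasurableSpace.comap U₀ inferInstance,
         MeasurableSpace.comap UR inferInstance, MeasurableSpace.comap UA inferInstance,
         MeasurableSpace.comap UY inferInstance] : Fin 5 → MeasurableSpace Ω) μ)
    (f₀ : 𝒲 × 𝒰₀ → 𝒴₀) (hf₀ : Measurable f₀)
    (fR : 𝒲 × 𝒰R → Fin 2) (hfR : Measurable fR)
    (fA : 𝒲 × 𝒴₀ × 𝒰A → Fin 2) (hfA : Measurable fA)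
    (gA : 𝒲 × 𝒰A → Fin 2) (hgA : Measurable gA)
    (fY : 𝒲 × 𝒴₀ × Fin 2 × 𝒰Y → ℝ) (hfY : Measurable fY)
    (gY : 𝒲 × Fin 2 × 𝒰Y → ℝ) (hgY : Measurable gY)
    (Y₀ : Ω → 𝒴₀) (R A : Ω → Fin 2) (Y₁ : Ω → ℝ)
    (hY₀ : ∀ ω, Y₀ ω = f₀ (W ω, U₀ ω))
    (hR : ∀ ω, R ω = fR (W ω, UR ω))
    (hA : ∀ ω, A ω = if R ω = 1 then fA (W ω, Y₀ ω, UA ω) else gA (W ω, UA ω))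
    (hY₁ : ∀ ω, Y₁ ω = if R ω = 1 then fY (W ω, Y₀ ω, A ω, UY ω) else gY (W ω, A ω, UY ω))
    (Ynat : Fin 2 → Ω → ℝ)
    (hYnat : ∀ (a : Fin 2) (ω : Ω),
      Ynat a ω = if R ω = 1 then fY (W ω, Y₀ ω, a, UY ω) else gY (W ω, a, UY ω))
    (Yful : Fin 2 → Ω → ℝ)
    (hYful : ∀ (a : Fin 2) (ω : Ω), Yful a ω = fY (W ω, Y₀ ω, a, UY ω))
    (hIntY₁ : Integrable Y₁ μ)
    (hIntN0 : Integrable (Ynat 0) μ) (hIntN1 : Integrable (Ynat 1) μ)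
    (hIntF0 : Integrable (Yful 0) μ) (hIntF1 : Integrable (Yful 1) μ)
    (hpos : ∀ (w : 𝒲) (y : 𝒴₀) (r a : Fin 2),
      0 < μ {ω | W ω = w ∧ Y₀ ω = y ∧ R ω = r ∧ A ω = a})
    (π1 : 𝒲 → 𝒴₀ → ℝ)
    (hπ1 : ∀ (w : 𝒲) (y : 𝒴₀),
      π1 w y = (cprob μ {ω | A ω = 1} {ω | W ω = w ∧ Y₀ ω = y ∧ R ω = 1}).toReal)
    (π0 : 𝒲 → ℝ)
    (hπ0 : ∀ w : 𝒲, π0 w = (cprob μ {ω | A ω = 1} {ω | W ω = w ∧ R ω = 0}).toReal)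
    :
    ∀ (Qt1 : 𝒲 → 𝒴₀ → Fin 2 → ℝ) (Qt0 : 𝒲 → Fin 2 → ℝ),
      ∫ ω, (((if R ω = 1 then Qt1 (W ω) (Y₀ ω) 1 else Qt0 (W ω) 1)
              - (if R ω = 1 then Qt1 (W ω) (Y₀ ω) 0 else Qt0 (W ω) 0))
            + (((A ω : ℕ) : ℝ) - (if R ω = 1 then π1 (W ω) (Y₀ ω) else π0 (W ω)))
                / ((if R ω = 1 then π1 (W ω) (Y₀ ω) else π0 (W ω))
                    * (1 - (if R ω = 1 then π1 (W ω) (Y₀ ω) else π0 (W ω))))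
                * (Y₁ ω - (if R ω = 1 then Qt1 (W ω) (Y₀ ω) (A ω) else Qt0 (W ω) (A ω)))) ∂μ
        = (∫ ω, Ynat 1 ω ∂μ) - (∫ ω, Ynat 0 ω ∂μ) :=
  lmSCM_aipw_robust_outcome_misspecification_general μ W U₀ UR UA UY hW hU₀ hUR hUA hUY hIndep f₀
    hf₀ fR hfR fA hfA gA hgA fY hfY gY hgY Y₀ R A Y₁ hY₀ hR hA hY₁ Ynat hYnat hIntY₁ hIntN0 hIntN1
    hpos π1 hπ1 π0 hπ0
end

section
/- In the discrete lm-SCM for the motivating example (Figure 1c), under Positivity, the population version of the DR.F (doubly-robust FATE) construction with true nuisance components recovers the FATE: defining τ(w) := Σ_{y ∈ 𝒴₀} μ(Y₀ = y | W = w, R = 1) · (Q₁(w, y, 1) − Q₁(w, y, 0)) and e(w) := μ(R = 1 | W = w) (which is strictly positive under Positivity), one has E[ τ(W) + (R / e(W)) · ( (Q₁(W, Y₀, 1) − Q₁(W, Y₀, 0)) − τ(W) ) ] = φ, where Q₁(w, y, a) := E[Y₁ | W = w, Y₀ = y, A = a, R = 1]. -/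
open MeasureTheory ProbabilityTheory

/-!
Write `V = (W, Y₀, R, A)` and `Xᵖ = {(W, Y₀) = p}` for the strata `p = (w, y)`.
Since `U_Y` is independent of `V` and `Y₁ = f_Y(w, y, a, U_Y)` on `{W = w, Y₀ = y, A = a, R = 1}`,
`Q₁(w, y, a) = E[f_Y(w, y, a, U_Y)]`, and integrating `Y₁^{a1} = f_Y(W, Y₀, a, U_Y)` over `Xᵖ`
gives `μ(Xᵖ) Q₁(w, y, a)`. Since `U₀` is independent of `(W, U_R)`, `Y₀` and `R` are conditionally
independent given `W`: `μ(Xᵖ ∩ {R = 1}) = μ(Xᵖ) e(w)`. On `Xᵖ` the DR.F score is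
`τ(w) + R / e(w) (d - τ(w))` with `d = Q₁(w, y, 1) - Q₁(w, y, 0)`, and the last identity makes its
integral over `Xᵖ` equal to `μ(Xᵖ) d`. Summing over the strata gives the FATE.
-/

section

variable {Ω α : Type*}

theorem integral_eq_sum_setIntegral_fiber {E : Type*} [NormedAddCommGroup E] [NormedSpace ℝ E]
    [MeasurableSpace Ω] {μ : Measure Ω} [Fintype α] [MeasurableSpace α]
    [MeasurableSingletonClass α] {X : Ω → α} (hX : Measurable X) {f : Ω → E}
    (hf : Integrable f μ) :
    ∫ ω, f ω ∂μ = ∑ a, ∫ ω in X ⁻¹' {a}, f ω ∂μ := by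
  rw [← integral_iUnion_fintype (fun a => hX (measurableSet_singleton a))
    (pairwise_disjoint_fiber X) (fun _ => hf.integrableOn), ← Set.preimage_iUnion,
    Set.iUnion_of_singleton, Set.preimage_univ, setIntegral_univ]

theorem ProbabilityTheory.iIndep.indep_biSup_compl_singleton {ι : Type*}
    {m : ι → MeasurableSpace Ω} {mΩ : MeasurableSpace Ω} {μ : Measure Ω}
    (h_le : ∀ i, m i ≤ mΩ) (h : iIndep m μ) (i : ι) :
    Indep (⨆ j ∈ ({i}ᶜ : Set ι), m j) (m i) μ := by
  simpa only [iSup_singleton] using indep_iSup_of_disjoint h_le h (disjoint_compl_left (a := {i}))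

theorem Measurable.biSup_of_mem {ι β : Type*} [MeasurableSpace β] {m : ι → MeasurableSpace Ω}
    {S : Set ι} {i : ι} (hi : i ∈ S) {X : Ω → β} (hX : Measurable[m i] X) :
    Measurable[⨆ j ∈ S, m j] X :=
  hX.mono (le_iSup₂ (f := fun j (_ : j ∈ S) => m j) i hi) le_rfl

theorem setIntegral_comp_eq_measureReal_mul_of_indep {β : Type*} [MeasurableSpace β]
    {m₁ m₂ mΩ : MeasurableSpace Ω} {μ : Measure Ω} (hm₂ : m₂ ≤ mΩ) (hind : Indep m₁ m₂ μ)
    {E : Set Ω} (hE : MeasurableSet[m₁] E) {U : Ω → β} (hU : Measurable[m₂] U) {h : β → ℝ}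
    (hh : Measurable h) :
    ∫ ω in E, h (U ω) ∂μ = μ.real E * ∫ ω, h (U ω) ∂μ := by
  have hU' : Measurable U := hU.mono hm₂ le_rfl
  have hmap : (μ.restrict E).map U = μ E • μ.map U := by
    ext F hF
    rw [Measure.map_apply hU' hF, Measure.restrict_apply (hU' hF), Measure.smul_apply,
      smul_eq_mul, Measure.map_apply hU' hF, Set.inter_comm,
      (Indep_iff _ _ μ).1 hind _ _ hE (hU hF)]
  rw [← integral_map hU'.aemeasurable hh.aestronglyMeasurable, hmap, integral_smul_measure,
    integral_map hU'.aemeasurable hh.aestronglyMeasurable, smul_eq_mul, measureReal_def]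

theorem cexp_eq_integral_of_indep {β : Type*} [MeasurableSpace β]
    {m₁ m₂ mΩ : MeasurableSpace Ω} {μ : Measure Ω} [IsFiniteMeasure μ]
    (hm₁ : m₁ ≤ mΩ) (hm₂ : m₂ ≤ mΩ) (hind : Indep m₁ m₂ μ) {E : Set Ω}
    (hE : MeasurableSet[m₁] E) (hE₀ : μ E ≠ 0) {U : Ω → β} (hU : Measurable[m₂] U)
    {h : β → ℝ} (hh : Measurable h) {X : Ω → ℝ} (hX : ∀ ω ∈ E, X ω = h (U ω)) :
    cexp μ X E = ∫ ω, h (U ω) ∂μ := by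
  rw [cexp, setIntegral_congr_fun (hm₁ _ hE) hX,
    setIntegral_comp_eq_measureReal_mul_of_indep hm₂ hind hE hU hh, measureReal_def,
    inv_mul_cancel_left₀ (ENNReal.toReal_ne_zero.2 ⟨hE₀, measure_ne_top μ E⟩)]

theorem measure_fiber_inter_eq_mul_cprob_of_indep {β γ : Type*}
    [MeasurableSpace α] [MeasurableSingletonClass α] [MeasurableSpace β] [MeasurableSpace γ]
    [MeasurableSingletonClass γ] {m₁ m₂ mΩ : MeasurableSpace Ω} {μ : Measure Ω}
    [IsFiniteMeasure μ] (hind : Indep m₁ m₂ μ) {W : Ω → α} {U : Ω → β} {Y : Ω → γ}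
    {f : α × β → γ} (hf : Measurable f) (hY : ∀ ω, Y ω = f (W ω, U ω))
    (hU : Measurable[m₁] U) (hW : Measurable[m₂] W) {S : Set Ω} (hS : MeasurableSet[m₂] S)
    (p : α × γ) :
    μ ((fun ω => (W ω, Y ω)) ⁻¹' {p} ∩ S)
      = μ ((fun ω => (W ω, Y ω)) ⁻¹' {p}) * cprob μ S {ω | W ω = p.1} := by
  set C := U ⁻¹' {u | f (p.1, u) = p.2}
  set D := {ω | W ω = p.1}
  have hC : MeasurableSet[m₁] C :=
    hU ((hf.comp measurable_prodMk_left) (measurableSet_singleton _))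
  have hD : MeasurableSet[m₂] D := hW (measurableSet_singleton _)
  have hfiber : (fun ω => (W ω, Y ω)) ⁻¹' {p} = C ∩ D := by
    ext ω
    simp only [Set.mem_preimage, Set.mem_singleton_iff, Set.mem_inter_iff, Set.mem_ofPred_eq,
      C, D, Prod.ext_iff, hY]
    constructor
    · rintro ⟨hw, hy⟩
      exact ⟨hw ▸ hy, hw⟩
    · rintro ⟨hy, hw⟩
      exact ⟨hw, hw ▸ hy⟩
  have hindep := (Indep_iff _ _ μ).1 hind
  rw [hfiber, Set.inter_assoc, hindep _ _ hC (hD.inter hS), hindep _ _ hC hD, cprob, mul_assoc,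
    Set.inter_comm S, ENNReal.mul_div_cancel' (fun h0 => measure_mono_null Set.inter_subset_left h0)
    (fun h => absurd h (measure_ne_top μ D))]

theorem setIntegral_add_ipw_eq [MeasurableSpace Ω] {μ : Measure Ω} [IsFiniteMeasure μ]
    {R : Ω → Fin 2} (hR : Measurable R) {B : Set Ω} {e : ℝ}
    (he : μ.real (B ∩ {ω | R ω = 1}) = μ.real B * e) (hpos : 0 < μ (B ∩ {ω | R ω = 1}))
    (t d : ℝ) :
    ∫ ω in B, (t + ((R ω : ℕ) : ℝ) / e * (d - t)) ∂μ = μ.real B * d := by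
  have he₀ : e ≠ 0 := by
    rintro rfl
    rw [mul_zero, measureReal_eq_zero_iff] at he
    exact hpos.ne' he
  have hR₁ : MeasurableSet {ω | R ω = 1} := hR (measurableSet_singleton 1)
  have hind : ∀ ω, ((R ω : ℕ) : ℝ) = {ω | R ω = 1}.indicator 1 ω := fun ω => by
    rcases Fin.exists_fin_two.1 ⟨R ω, rfl⟩ with h | h <;> simp [Set.indicator, h]
  simp_rw [hind, div_mul_eq_mul_div, mul_div_assoc]
  rw [integral_add (integrable_const t) ?_, setIntegral_const, integral_mul_const,
    integral_indicator_one hR₁, measureReal_restrict_apply hR₁, Set.inter_comm, he]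
  · field_simp
    ring
  · exact ((integrable_const 1).indicator hR₁).mul_const _

end

noncomputable def drfScore {𝒲 𝒴₀ : Type*} (τ e : 𝒲 → ℝ) (Q1 : 𝒲 → 𝒴₀ → Fin 2 → ℝ)
    (x : 𝒲 × 𝒴₀ × Fin 2) : ℝ :=
  τ x.1 + ((x.2.2 : ℕ) : ℝ) / e x.1 * ((Q1 x.1 x.2.1 1 - Q1 x.1 x.2.1 0) - τ x.1)

theorem lmSCM_measurable_endogenous {Ω 𝒲 𝒴₀ 𝒰₀ 𝒰R 𝒰A : Type*} {m : MeasurableSpace Ω}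
    [MeasurableSpace 𝒲] [MeasurableSpace 𝒴₀] [MeasurableSpace 𝒰₀] [MeasurableSpace 𝒰R]
    [MeasurableSpace 𝒰A] {W : Ω → 𝒲} {U₀ : Ω → 𝒰₀} {UR : Ω → 𝒰R} {UA : Ω → 𝒰A}
    (hW : Measurable W) (hU₀ : Measurable U₀) (hUR : Measurable UR) (hUA : Measurable UA)
    {f₀ : 𝒲 × 𝒰₀ → 𝒴₀} (hf₀ : Measurable f₀) {fR : 𝒲 × 𝒰R → Fin 2} (hfR : Measurable fR)
    {fA : 𝒲 × 𝒴₀ × 𝒰A → Fin 2} (hfA : Measurable fA) {gA : 𝒲 × 𝒰A → Fin 2}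
    (hgA : Measurable gA) {Y₀ : Ω → 𝒴₀} {R A : Ω → Fin 2} (hY₀ : ∀ ω, Y₀ ω = f₀ (W ω, U₀ ω))
    (hR : ∀ ω, R ω = fR (W ω, UR ω))
    (hA : ∀ ω, A ω = if R ω = 1 then fA (W ω, Y₀ ω, UA ω) else gA (W ω, UA ω)) :
    Measurable fun ω => (W ω, Y₀ ω, R ω, A ω) := by
  have hY₀m : Measurable Y₀ := funext hY₀ ▸ hf₀.comp (hW.prodMk hU₀)
  have hRm : Measurable R := funext hR ▸ hfR.comp (hW.prodMk hUR)
  have hAm : Measurable A := funext hA ▸ Measurable.ite (hRm (measurableSet_singleton 1))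
    (hfA.comp (hW.prodMk (hY₀m.prodMk hUA))) (hgA.comp (hW.prodMk hUA))
  exact hW.prodMk (hY₀m.prodMk (hRm.prodMk hAm))

section Model

variable {Ω 𝒲 𝒴₀ 𝒰₀ 𝒰R 𝒰A 𝒰Y : Type*} [MeasurableSpace Ω] [MeasurableSpace 𝒲]
  [MeasurableSpace 𝒴₀] [MeasurableSpace 𝒰₀] [MeasurableSpace 𝒰R] [MeasurableSpace 𝒰A]
  [MeasurableSpace 𝒰Y] {μ : Measure Ω}
  {W : Ω → 𝒲} {U₀ : Ω → 𝒰₀} {UR : Ω → 𝒰R} {UA : Ω → 𝒰A} {UY : Ω → 𝒰Y}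

abbrev exoSigma (W : Ω → 𝒲) (U₀ : Ω → 𝒰₀) (UR : Ω → 𝒰R) (UA : Ω → 𝒰A) (UY : Ω → 𝒰Y) :
    Fin 5 → MeasurableSpace Ω :=
  ![.comap W inferInstance, .comap U₀ inferInstance, .comap UR inferInstance,
    .comap UA inferInstance, .comap UY inferInstance]

theorem exoSigma_le (hW : Measurable W) (hU₀ : Measurable U₀) (hUR : Measurable UR)
    (hUA : Measurable UA) (hUY : Measurable UY) (i : Fin 5) :
    exoSigma W U₀ UR UA UY i ≤ ‹MeasurableSpace Ω› := by
  fin_cases i <;> exact Measurable.comap_le ‹_›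

theorem lmSCM_measureReal_fiber_inter_eq [IsFiniteMeasure μ] [MeasurableSingletonClass 𝒲]
    [MeasurableSingletonClass 𝒴₀] (hW : Measurable W) (hU₀ : Measurable U₀)
    (hUR : Measurable UR) (hUA : Measurable UA) (hUY : Measurable UY)
    (hIndep : iIndep (exoSigma W U₀ UR UA UY) μ) {f₀ : 𝒲 × 𝒰₀ → 𝒴₀} (hf₀ : Measurable f₀)
    {fR : 𝒲 × 𝒰R → Fin 2} (hfR : Measurable fR) {Y₀ : Ω → 𝒴₀} {R : Ω → Fin 2}
    (hY₀ : ∀ ω, Y₀ ω = f₀ (W ω, U₀ ω)) (hR : ∀ ω, R ω = fR (W ω, UR ω)) (p : 𝒲 × 𝒴₀) :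
    μ.real ((fun ω => (W ω, Y₀ ω)) ⁻¹' {p} ∩ {ω | R ω = 1})
      = μ.real ((fun ω => (W ω, Y₀ ω)) ⁻¹' {p})
        * (cprob μ {ω | R ω = 1} {ω | W ω = p.1}).toReal := by
  have hW' : Measurable[⨆ j ∈ ({1}ᶜ : Set (Fin 5)), exoSigma W U₀ UR UA UY j] W :=
    .biSup_of_mem (i := 0) (by decide) (comap_measurable W)
  have hR' : Measurable[⨆ j ∈ ({1}ᶜ : Set (Fin 5)), exoSigma W U₀ UR UA UY j] R :=
    funext hR ▸ hfR.comp (hW'.prodMk (.biSup_of_mem (i := 2) (by decide) (comap_measurable UR)))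
  rw [measureReal_def, measureReal_def, ← ENNReal.toReal_mul]
  exact congrArg _ <| measure_fiber_inter_eq_mul_cprob_of_indep
    (hIndep.indep_biSup_compl_singleton (exoSigma_le hW hU₀ hUR hUA hUY) 1).symm hf₀ hY₀
    (comap_measurable U₀) hW' (hR' (measurableSet_singleton 1)) p

theorem lmSCM_indep_endogenous_UY (hW : Measurable W) (hU₀ : Measurable U₀)
    (hUR : Measurable UR) (hUA : Measurable UA) (hUY : Measurable UY)
    (hIndep : iIndep (exoSigma W U₀ UR UA UY) μ) {f₀ : 𝒲 × 𝒰₀ → 𝒴₀} (hf₀ : Measurable f₀)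
    {fR : 𝒲 × 𝒰R → Fin 2} (hfR : Measurable fR) {fA : 𝒲 × 𝒴₀ × 𝒰A → Fin 2}
    (hfA : Measurable fA) {gA : 𝒲 × 𝒰A → Fin 2} (hgA : Measurable gA) {Y₀ : Ω → 𝒴₀}
    {R A : Ω → Fin 2} (hY₀ : ∀ ω, Y₀ ω = f₀ (W ω, U₀ ω)) (hR : ∀ ω, R ω = fR (W ω, UR ω))
    (hA : ∀ ω, A ω = if R ω = 1 then fA (W ω, Y₀ ω, UA ω) else gA (W ω, UA ω)) :
    Indep (.comap (fun ω => (W ω, Y₀ ω, R ω, A ω)) inferInstance) (.comap UY inferInstance) μ := by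
  have hle := exoSigma_le hW hU₀ hUR hUA hUY
  refine indep_of_indep_of_le_left (hIndep.indep_biSup_compl_singleton hle 4)
    (Measurable.comap_le ?_)
  exact lmSCM_measurable_endogenous (m := ⨆ j ∈ ({4}ᶜ : Set (Fin 5)), exoSigma W U₀ UR UA UY j)
    (.biSup_of_mem (i := 0) (by decide) (comap_measurable W))
    (.biSup_of_mem (i := 1) (by decide) (comap_measurable U₀))
    (.biSup_of_mem (i := 2) (by decide) (comap_measurable UR))
    (.biSup_of_mem (i := 3) (by decide) (comap_measurable UA)) hf₀ hfR hfA hgA hY₀ hR hA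

theorem lmSCM_setIntegral_fiber_fullOutcome [IsFiniteMeasure μ] [Finite 𝒲] [Finite 𝒴₀]
    [MeasurableSingletonClass 𝒲] [MeasurableSingletonClass 𝒴₀] {Y₀ : Ω → 𝒴₀} {R A : Ω → Fin 2}
    (hV : Measurable fun ω => (W ω, Y₀ ω, R ω, A ω)) (hUY : Measurable UY)
    (hindY : Indep (.comap (fun ω => (W ω, Y₀ ω, R ω, A ω)) inferInstance)
      (.comap UY inferInstance) μ)
    {fY : 𝒲 × 𝒴₀ × Fin 2 × 𝒰Y → ℝ} (hfY : Measurable fY) {gY : 𝒲 × Fin 2 × 𝒰Y → ℝ}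
    {Y₁ : Ω → ℝ}
    (hY₁ : ∀ ω, Y₁ ω = if R ω = 1 then fY (W ω, Y₀ ω, A ω, UY ω) else gY (W ω, A ω, UY ω))
    {p : 𝒲 × 𝒴₀} {a : Fin 2} (hpos : 0 < μ {ω | W ω = p.1 ∧ Y₀ ω = p.2 ∧ R ω = 1 ∧ A ω = a}) :
    ∫ ω in (fun ω => (W ω, Y₀ ω)) ⁻¹' {p}, fY (W ω, Y₀ ω, a, UY ω) ∂μ
      = μ.real ((fun ω => (W ω, Y₀ ω)) ⁻¹' {p})
        * cexp μ Y₁ {ω | W ω = p.1 ∧ Y₀ ω = p.2 ∧ A ω = a ∧ R ω = 1} := by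
  set B := (fun ω => (W ω, Y₀ ω)) ⁻¹' {p}
  set E := {ω | W ω = p.1 ∧ Y₀ ω = p.2 ∧ A ω = a ∧ R ω = 1}
  have hB : MeasurableSet[.comap (fun ω => (W ω, Y₀ ω, R ω, A ω)) inferInstance] B :=
    ⟨(fun q => (q.1, q.2.1)) ⁻¹' {p}, (Set.toFinite _).measurableSet, rfl⟩
  have hE : MeasurableSet[.comap (fun ω => (W ω, Y₀ ω, R ω, A ω)) inferInstance] E :=
    ⟨{q | q.1 = p.1 ∧ q.2.1 = p.2 ∧ q.2.2.2 = a ∧ q.2.2.1 = 1}, (Set.toFinite _).measurableSet, rfl⟩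
  have hE₀ : μ E ≠ 0 := by
    refine (hpos.trans_le (measure_mono ?_)).ne'
    exact fun _ ⟨hw, hy, hr, ha⟩ => ⟨hw, hy, ha, hr⟩
  have hY₁E : ∀ ω ∈ E, Y₁ ω = fY (p.1, p.2, a, UY ω) := by
    rintro ω ⟨hw, hy, ha, hr⟩
    rw [hY₁, if_pos hr, hw, hy, ha]
  have hfYp : Measurable fun u => fY (p.1, p.2, a, u) := by fun_prop
  rw [cexp_eq_integral_of_indep hV.comap_le hUY.comap_le hindY hE hE₀ (comap_measurable UY) hfYp
      hY₁E, ← setIntegral_comp_eq_measureReal_mul_of_indep hUY.comap_le hindY hB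
      (comap_measurable UY) hfYp]
  refine setIntegral_congr_fun (hV.fst.prodMk hV.snd.fst (measurableSet_singleton p)) ?_
  rintro ω (rfl : (W ω, Y₀ ω) = p)
  rfl

end Model

theorem lmSCM_drf_unbiased_general
    {Ω 𝒲 𝒴₀ 𝒰₀ 𝒰R 𝒰A 𝒰Y : Type*}
    [MeasurableSpace Ω]
    [Fintype 𝒲] [MeasurableSpace 𝒲] [MeasurableSingletonClass 𝒲]
    [Fintype 𝒴₀] [MeasurableSpace 𝒴₀] [MeasurableSingletonClass 𝒴₀]
    [MeasurableSpace 𝒰₀] [MeasurableSpace 𝒰R] [MeasurableSpace 𝒰A] [MeasurableSpace 𝒰Y]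
    (μ : Measure Ω) [IsProbabilityMeasure μ]
    (W : Ω → 𝒲) (U₀ : Ω → 𝒰₀) (UR : Ω → 𝒰R) (UA : Ω → 𝒰A) (UY : Ω → 𝒰Y)
    (hW : Measurable W) (hU₀ : Measurable U₀) (hUR : Measurable UR)
    (hUA : Measurable UA) (hUY : Measurable UY)
    (hIndep : iIndep
      (![MeasurableSpace.comap W inferInstance, MeasurableSpace.comap U₀ inferInstance,
         MeasurableSpace.comap UR inferInstance, MeasurableSpace.comap UA inferInstance,
         MeasurableSpace.comap UY inferInstance] : Fin 5 → MeasurableSpace Ω) μ)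
    (f₀ : 𝒲 × 𝒰₀ → 𝒴₀) (hf₀ : Measurable f₀)
    (fR : 𝒲 × 𝒰R → Fin 2) (hfR : Measurable fR)
    (fA : 𝒲 × 𝒴₀ × 𝒰A → Fin 2) (hfA : Measurable fA)
    (gA : 𝒲 × 𝒰A → Fin 2) (hgA : Measurable gA)
    (fY : 𝒲 × 𝒴₀ × Fin 2 × 𝒰Y → ℝ) (hfY : Measurable fY)
    (gY : 𝒲 × Fin 2 × 𝒰Y → ℝ)
    (Y₀ : Ω → 𝒴₀) (R A : Ω → Fin 2) (Y₁ : Ω → ℝ)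
    (hY₀ : ∀ ω, Y₀ ω = f₀ (W ω, U₀ ω))
    (hR : ∀ ω, R ω = fR (W ω, UR ω))
    (hA : ∀ ω, A ω = if R ω = 1 then fA (W ω, Y₀ ω, UA ω) else gA (W ω, UA ω))
    (hY₁ : ∀ ω, Y₁ ω = if R ω = 1 then fY (W ω, Y₀ ω, A ω, UY ω) else gY (W ω, A ω, UY ω))
    (Yful : Fin 2 → Ω → ℝ)
    (hYful : ∀ (a : Fin 2) (ω : Ω), Yful a ω = fY (W ω, Y₀ ω, a, UY ω))
    (hIntF0 : Integrable (Yful 0) μ) (hIntF1 : Integrable (Yful 1) μ)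
    (hpos : ∀ (w : 𝒲) (y : 𝒴₀) (r a : Fin 2),
      0 < μ {ω | W ω = w ∧ Y₀ ω = y ∧ R ω = r ∧ A ω = a})
    (Q1 : 𝒲 → 𝒴₀ → Fin 2 → ℝ)
    (hQ1 : ∀ (w : 𝒲) (y : 𝒴₀) (a : Fin 2),
      Q1 w y a = cexp μ Y₁ {ω | W ω = w ∧ Y₀ ω = y ∧ A ω = a ∧ R ω = 1})
    (τ : 𝒲 → ℝ)
    (e : 𝒲 → ℝ)
    (he : ∀ w : 𝒲, e w = (cprob μ {ω | R ω = 1} {ω | W ω = w}).toReal)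
    :
    ∫ ω, (τ (W ω)
          + (((R ω : ℕ) : ℝ) / e (W ω))
              * ((Q1 (W ω) (Y₀ ω) 1 - Q1 (W ω) (Y₀ ω) 0) - τ (W ω))) ∂μ
      = (∫ ω, Yful 1 ω ∂μ) - (∫ ω, Yful 0 ω ∂μ) := by
  have hV := lmSCM_measurable_endogenous hW hU₀ hUR hUA hf₀ hfR hfA hgA hY₀ hR hA
  have hindY := lmSCM_indep_endogenous_UY hW hU₀ hUR hUA hUY hIndep hf₀ hfR hfA hgA hY₀ hR hA
  set X := fun ω => (W ω, Y₀ ω)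
  have hX : Measurable X := hV.fst.prodMk hV.snd.fst
  have hstrat : ∀ p, μ.real (X ⁻¹' {p} ∩ {ω | R ω = 1}) = μ.real (X ⁻¹' {p}) * e p.1 := by
    intro p
    rw [he]
    exact lmSCM_measureReal_fiber_inter_eq hW hU₀ hUR hUA hUY hIndep hf₀ hfR hY₀ hR p
  have hLHS : ∀ p, ∫ ω in X ⁻¹' {p}, drfScore τ e Q1 (W ω, Y₀ ω, R ω) ∂μ
      = μ.real (X ⁻¹' {p}) * (Q1 p.1 p.2 1 - Q1 p.1 p.2 0) := fun p => by
    rw [← setIntegral_add_ipw_eq hV.snd.snd.fst (hstrat p) ((hpos p.1 p.2 1 1).trans_le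
      (measure_mono fun _ ⟨hw, hy, hr, _⟩ => ⟨Prod.ext hw hy, hr⟩)) (τ p.1)]
    refine setIntegral_congr_fun (hX (measurableSet_singleton p)) ?_
    rintro ω (rfl : X ω = p)
    rfl
  have hRHS : ∀ a p, ∫ ω in X ⁻¹' {p}, Yful a ω ∂μ = μ.real (X ⁻¹' {p}) * Q1 p.1 p.2 a := by
    intro a p
    rw [hQ1, ← lmSCM_setIntegral_fiber_fullOutcome hV hUY hindY hfY hY₁ (hpos p.1 p.2 1 a)]
    exact setIntegral_congr_fun (hX (measurableSet_singleton p)) fun ω _ => hYful a ω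
  have hG : Integrable (fun ω => drfScore τ e Q1 (W ω, Y₀ ω, R ω)) μ :=
    (Integrable.of_finite (f := drfScore τ e Q1)).comp_measurable
      (hW.prodMk (hV.snd.fst.prodMk hV.snd.snd.fst))
  change ∫ ω, drfScore τ e Q1 (W ω, Y₀ ω, R ω) ∂μ = _
  rw [integral_eq_sum_setIntegral_fiber hX hG, integral_eq_sum_setIntegral_fiber hX hIntF1,
    integral_eq_sum_setIntegral_fiber hX hIntF0, ← Finset.sum_sub_distrib]
  simp only [hLHS, hRHS, mul_sub]

/-- In the discrete lm-SCM of Figure 1c, under positivity, the population version of the DR.F construction with true nuisance components recovers the FATE. -/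
theorem lmSCM_drf_unbiased
    {Ω 𝒲 𝒴₀ 𝒰₀ 𝒰R 𝒰A 𝒰Y : Type*}
    [MeasurableSpace Ω]
    [Fintype 𝒲] [Nonempty 𝒲] [MeasurableSpace 𝒲] [MeasurableSingletonClass 𝒲]
    [Fintype 𝒴₀] [Nonempty 𝒴₀] [MeasurableSpace 𝒴₀] [MeasurableSingletonClass 𝒴₀]
    [MeasurableSpace 𝒰₀] [MeasurableSpace 𝒰R] [MeasurableSpace 𝒰A] [MeasurableSpace 𝒰Y]
    (μ : Measure Ω) [IsProbabilityMeasure μ]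
    (W : Ω → 𝒲) (U₀ : Ω → 𝒰₀) (UR : Ω → 𝒰R) (UA : Ω → 𝒰A) (UY : Ω → 𝒰Y)
    (hW : Measurable W) (hU₀ : Measurable U₀) (hUR : Measurable UR)
    (hUA : Measurable UA) (hUY : Measurable UY)
    (hIndep : iIndep
      (![MeasurableSpace.comap W inferInstance, MeasurableSpace.comap U₀ inferInstance,
         MeasurableSpace.comap UR inferInstance, MeasurableSpace.comap UA inferInstance,
         MeasurableSpace.comap UY inferInstance] : Fin 5 → MeasurableSpace Ω) μ)
    (f₀ : 𝒲 × 𝒰₀ → 𝒴₀) (hf₀ : Measurable f₀)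
    (fR : 𝒲 × 𝒰R → Fin 2) (hfR : Measurable fR)
    (fA : 𝒲 × 𝒴₀ × 𝒰A → Fin 2) (hfA : Measurable fA)
    (gA : 𝒲 × 𝒰A → Fin 2) (hgA : Measurable gA)
    (fY : 𝒲 × 𝒴₀ × Fin 2 × 𝒰Y → ℝ) (hfY : Measurable fY)
    (gY : 𝒲 × Fin 2 × 𝒰Y → ℝ) (hgY : Measurable gY)
    (Y₀ : Ω → 𝒴₀) (R A : Ω → Fin 2) (Y₁ : Ω → ℝ)
    (hY₀ : ∀ ω, Y₀ ω = f₀ (W ω, U₀ ω))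
    (hR : ∀ ω, R ω = fR (W ω, UR ω))
    (hA : ∀ ω, A ω = if R ω = 1 then fA (W ω, Y₀ ω, UA ω) else gA (W ω, UA ω))
    (hY₁ : ∀ ω, Y₁ ω = if R ω = 1 then fY (W ω, Y₀ ω, A ω, UY ω) else gY (W ω, A ω, UY ω))
    (Ynat : Fin 2 → Ω → ℝ)
    (hYnat : ∀ (a : Fin 2) (ω : Ω),
      Ynat a ω = if R ω = 1 then fY (W ω, Y₀ ω, a, UY ω) else gY (W ω, a, UY ω))
    (Yful : Fin 2 → Ω → ℝ)
    (hYful : ∀ (a : Fin 2) (ω : Ω), Yful a ω = fY (W ω, Y₀ ω, a, UY ω))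
    (hIntY₁ : Integrable Y₁ μ)
    (hIntN0 : Integrable (Ynat 0) μ) (hIntN1 : Integrable (Ynat 1) μ)
    (hIntF0 : Integrable (Yful 0) μ) (hIntF1 : Integrable (Yful 1) μ)
    (hpos : ∀ (w : 𝒲) (y : 𝒴₀) (r a : Fin 2),
      0 < μ {ω | W ω = w ∧ Y₀ ω = y ∧ R ω = r ∧ A ω = a})
    (Q1 : 𝒲 → 𝒴₀ → Fin 2 → ℝ)
    (hQ1 : ∀ (w : 𝒲) (y : 𝒴₀) (a : Fin 2),
      Q1 w y a = cexp μ Y₁ {ω | W ω = w ∧ Y₀ ω = y ∧ A ω = a ∧ R ω = 1})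
    (Q0 : 𝒲 → Fin 2 → ℝ)
    (hQ0 : ∀ (w : 𝒲) (a : Fin 2), Q0 w a = cexp μ Y₁ {ω | W ω = w ∧ A ω = a ∧ R ω = 0})
    (τ : 𝒲 → ℝ)
    (hτ : ∀ w : 𝒲, τ w = ∑ y : 𝒴₀,
      (cprob μ {ω | Y₀ ω = y} {ω | W ω = w ∧ R ω = 1}).toReal * (Q1 w y 1 - Q1 w y 0))
    (e : 𝒲 → ℝ)
    (he : ∀ w : 𝒲, e w = (cprob μ {ω | R ω = 1} {ω | W ω = w}).toReal)
    :
    ∫ ω, (τ (W ω)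
          + (((R ω : ℕ) : ℝ) / e (W ω))
              * ((Q1 (W ω) (Y₀ ω) 1 - Q1 (W ω) (Y₀ ω) 0) - τ (W ω))) ∂μ
      = (∫ ω, Yful 1 ω ∂μ) - (∫ ω, Yful 0 ω ∂μ) :=
  lmSCM_drf_unbiased_general μ W U₀ UR UA UY hW hU₀ hUR hUA hUY hIndep f₀ hf₀ fR hfR fA hfA gA hgA
    fY hfY gY Y₀ R A Y₁ hY₀ hR hA hY₁ Yful hYful hIntF0 hIntF1 hpos Q1 hQ1 τ e he
end
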